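/- arXiv:2205.13355 — 2 statements merged into one kernel-verified Lean document; each statement's English description precedes it below -/
import Mathlib

section
/- Let A be an n×n real symmetric positive semidefinite matrix with eigenvalues λ_1 ≥ … ≥ λ_n, and let X ∈ ℝ^{n×k} (1 ≤ k ≤ n) be such that XᵀAX is invertible. Then λ_k > 0, σ_k(XᵀA^{1/2}) > 0, and ‖A X (XᵀAX)^{-1}‖₂ ≤ κ(A_k)^{1/2} · η_k, where κ(A_k) = λ_1/λ_k is the condition number of the best rank-k approximation A_k of A and η_k = λ_k^{1/2} / σ_k(XᵀA^{1/2}). -/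
open Matrix

open scoped ComplexOrder in
/-- The positive semidefinite square root of a positive semidefinite matrix
(as `Matrix.PosSemidef.sqrt` was defined in Mathlib of December 2024). -/
noncomputable def Matrix.PosSemidef.sqrt {n 𝕜 : Type*} [Fintype n] [DecidableEq n] [RCLike 𝕜]
    {A : Matrix n n 𝕜} (hA : A.PosSemidef) : Matrix n n 𝕜 :=
  hA.1.eigenvectorUnitary.1 * diagonal ((↑) ∘ (√·) ∘ hA.1.eigenvalues) *
    (star hA.1.eigenvectorUnitary : Matrix n n 𝕜)

/-- The spectral norm (largest singular value) of a real matrix,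
as the `ℓ²→ℓ²` operator norm. -/
noncomputable def spectralNorm' {m n : ℕ} (M : Matrix (Fin m) (Fin n) ℝ) : ℝ :=
  ‖LinearMap.toContinuousLinearMap (Matrix.toEuclideanLin M)‖

/-- For a `k × n` matrix `M` with `k ≤ n`, the `k`-th largest (i.e. the smallest)
singular value of `M`: `σ_k(M) = min_{‖u‖ = 1} ‖Mᵀ u‖`. -/
noncomputable def sigmaLast {k n : ℕ} (M : Matrix (Fin k) (Fin n) ℝ) : ℝ :=
  ⨅ u : Metric.sphere (0 : EuclideanSpace ℝ (Fin k)) 1,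
    ‖Matrix.toEuclideanLin Mᵀ (u : EuclideanSpace ℝ (Fin k))‖

/-!
Put `S = A^{1/2}` and `B = Xᵀ S`. Then `Xᵀ A X = B Bᵀ` and `A X (Xᵀ A X)⁻¹ = S · Bᵀ (B Bᵀ)⁻¹`.
The C*-identity gives `‖S‖ = √‖A‖ ≤ √λ₁`. For the pseudo-inverse factor, with `w = (B Bᵀ)⁻¹ u`
and `v = Bᵀ w` one has `‖v‖² = ⟪w, u⟫ ≤ ‖w‖ ‖u‖` and `σ_k(B) ‖w‖ ≤ ‖v‖`, whence
`σ_k(B) ‖v‖ ≤ ‖u‖`. The right-hand side of the claim is just `√λ₁ / σ_k(B)`.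
Both positivity claims come from the invertibility of `B Bᵀ`: it makes `Bᵀ` injective, and it
forces `k = rank (Xᵀ A X) ≤ rank A`, the number of nonzero `λ_i`.
-/

open scoped Matrix.Norms.L2Operator ComplexOrder

namespace Matrix

section L2OpNorm

variable {m n 𝕜 : Type*} [Fintype m] [Fintype n] [DecidableEq n] [RCLike 𝕜]

lemma l2_opNorm_le_one_of_conjTranspose_mul_self_eq_one {W : Matrix m n 𝕜} (hW : Wᴴ * W = 1) :
    ‖W‖ ≤ 1 := by
  have h1 : ‖(1 : Matrix n n 𝕜)‖ ≤ 1 := by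
    rw [← diagonal_one, l2_opNorm_diagonal]
    exact (pi_norm_le_iff_of_nonneg zero_le_one).mpr fun _ ↦ by simp
  have hWW : ‖W‖ * ‖W‖ ≤ 1 := by rwa [← l2_opNorm_conjTranspose_mul_self, hW]
  nlinarith [norm_nonneg W]

lemma l2_opNorm_mul_diagonal_mul_conjTranspose_le [DecidableEq m] {W : Matrix m n 𝕜}
    (hW : Wᴴ * W = 1) (d : n → 𝕜) : ‖W * diagonal d * Wᴴ‖ ≤ ‖d‖ := by
  have hW1 := l2_opNorm_le_one_of_conjTranspose_mul_self_eq_one hW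
  calc ‖W * diagonal d * Wᴴ‖ ≤ ‖W‖ * ‖diagonal d‖ * ‖Wᴴ‖ :=
        (l2_opNorm_mul _ _).trans (by gcongr; exact l2_opNorm_mul _ _)
    _ ≤ 1 * ‖d‖ * 1 := by
        rw [l2_opNorm_conjTranspose, l2_opNorm_diagonal]
        gcongr
    _ = ‖d‖ := by ring

end L2OpNorm

namespace PosSemidef

variable {n 𝕜 : Type*} [Fintype n] [DecidableEq n] [RCLike 𝕜] {A : Matrix n n 𝕜}

lemma posSemidef_sqrt (hA : A.PosSemidef) : hA.sqrt.PosSemidef := by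
  have hD : (diagonal ((↑) ∘ (√·) ∘ hA.1.eigenvalues) : Matrix n n 𝕜).PosSemidef :=
    posSemidef_diagonal_iff.mpr fun i ↦ by simp [Real.sqrt_nonneg]
  simpa only [sqrt, Unitary.coe_star, star_eq_conjTranspose] using
    hD.mul_mul_conjTranspose_same (hA.1.eigenvectorUnitary : Matrix n n 𝕜)

lemma sqrt_mul_self (hA : A.PosSemidef) : hA.sqrt * hA.sqrt = A := by
  set U : Matrix n n 𝕜 := (hA.1.eigenvectorUnitary : Matrix n n 𝕜)
  set D : Matrix n n 𝕜 := diagonal ((↑) ∘ (√·) ∘ hA.1.eigenvalues)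
  have hU : star U * U = 1 := Unitary.coe_star_mul_self _
  have hDD : D * D = diagonal ((↑) ∘ hA.1.eigenvalues) := by
    simp only [D, diagonal_mul_diagonal]
    congr 1
    ext i
    simp [← RCLike.ofReal_mul, Real.mul_self_sqrt (hA.eigenvalues_nonneg i)]
  calc hA.sqrt * hA.sqrt = U * (D * (star U * U) * D) * star U := by
        simp only [sqrt, U, D, Matrix.mul_assoc]
    _ = A := by
        rw [hU, Matrix.mul_one, hDD]
        conv_rhs => rw [hA.1.spectral_theorem, Unitary.conjStarAlgAut_apply]

lemma l2_opNorm_sqrt (hA : A.PosSemidef) : ‖hA.sqrt‖ = √‖A‖ := by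
  have h : hA.sqrtᴴ * hA.sqrt = A := by rw [hA.posSemidef_sqrt.isHermitian.eq, hA.sqrt_mul_self]
  rw [← Real.sqrt_mul_self (norm_nonneg hA.sqrt), ← l2_opNorm_conjTranspose_mul_self, h]

lemma transpose_sqrt {A : Matrix n n ℝ} (hA : A.PosSemidef) : hA.sqrtᵀ = hA.sqrt := by
  rw [← conjTranspose_eq_transpose_of_trivial]
  exact hA.posSemidef_sqrt.isHermitian.eq

lemma mul_sqrt_mul_transpose {k : Type*} {A : Matrix n n ℝ} (hA : A.PosSemidef)
    (X : Matrix n k ℝ) : Xᵀ * hA.sqrt * (Xᵀ * hA.sqrt)ᵀ = Xᵀ * A * X := by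
  rw [transpose_mul, hA.transpose_sqrt, transpose_transpose, Matrix.mul_assoc Xᵀ,
    ← Matrix.mul_assoc hA.sqrt, hA.sqrt_mul_self, Matrix.mul_assoc]

variable {A W : Matrix n n ℝ} {lam : n → ℝ}

lemma nonneg_of_eq_mul_diagonal_mul_transpose (hA : A.PosSemidef) (hW : Wᵀ * W = 1)
    (hAeig : A = W * diagonal lam * Wᵀ) (i : n) : 0 ≤ lam i := by
  have hD : diagonal lam = Wᴴ * A * W := by
    rw [conjTranspose_eq_transpose_of_trivial, hAeig]
    simp only [← Matrix.mul_assoc, hW, Matrix.one_mul]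
    rw [Matrix.mul_assoc, hW, Matrix.mul_one]
  exact posSemidef_diagonal_iff.mp (hD ▸ hA.conjTranspose_mul_mul_same W) i

lemma l2_opNorm_sqrt_le (hA : A.PosSemidef) (hW : Wᵀ * W = 1)
    (hAeig : A = W * diagonal lam * Wᵀ) {c : ℝ} (hc0 : 0 ≤ c) (hc : ∀ i, lam i ≤ c) :
    ‖hA.sqrt‖ ≤ √c := by
  have hlam0 := hA.nonneg_of_eq_mul_diagonal_mul_transpose hW hAeig
  rw [hA.l2_opNorm_sqrt]
  gcongr
  calc ‖A‖ ≤ ‖lam‖ := by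
        rw [hAeig, ← conjTranspose_eq_transpose_of_trivial]
        exact l2_opNorm_mul_diagonal_mul_conjTranspose_le (by simpa using hW) lam
    _ ≤ c := pi_norm_le_iff_of_nonneg hc0 |>.mpr fun i ↦ by
        rw [Real.norm_of_nonneg (hlam0 i)]
        exact hc i

end PosSemidef

lemma card_le_rank_of_isUnit_mul_mul {K m k : Type*} [Field K] [Fintype m] [Fintype k]
    [DecidableEq k] {Y : Matrix k m K} {A : Matrix m m K} {X : Matrix m k K}
    (h : IsUnit (Y * A * X)) : Fintype.card k ≤ A.rank :=
  rank_of_isUnit _ h ▸ (rank_mul_le_left _ _).trans (rank_mul_le_right _ _)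

lemma pos_of_lt_rank_diagonal {K : Type*} [Field K] [LinearOrder K] {n : ℕ} {lam : Fin n → K}
    (hlam : Antitone lam) (h0 : ∀ i, 0 ≤ lam i) {i : Fin n} (hi : (i : ℕ) < (diagonal lam).rank) :
    0 < lam i := by
  refine (h0 i).lt_of_ne' fun hzero ↦ ?_
  have hsupp : ∀ j, lam j ≠ 0 → (j : ℕ) < i := fun j hj ↦
    lt_of_not_ge fun hij ↦ hj (le_antisymm (hzero ▸ hlam (Fin.le_def.mpr hij)) (h0 j))
  have hcard := Fintype.card_subtype_mono _ _ hsupp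
  rw [Fintype.card_fin_lt_of_le i.is_le'] at hcard
  rw [rank_diagonal] at hi
  omega

lemma inner_toEuclideanLin_transpose {m n : Type*} [Fintype m] [Fintype n] [DecidableEq m]
    [DecidableEq n] (M : Matrix m n ℝ) (x : EuclideanSpace ℝ m) (y : EuclideanSpace ℝ n) :
    inner ℝ (toEuclideanLin Mᵀ x) y = inner ℝ x (toEuclideanLin M y) := by
  rw [← conjTranspose_eq_transpose_of_trivial, toEuclideanLin_conjTranspose_eq_adjoint,
    LinearMap.adjoint_inner_left]

end Matrix

open Matrix

section SigmaLast

variable {k n : ℕ}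

lemma sigmaLast_mul_norm_le (M : Matrix (Fin k) (Fin n) ℝ) (w : EuclideanSpace ℝ (Fin k)) :
    sigmaLast M * ‖w‖ ≤ ‖toEuclideanLin Mᵀ w‖ := by
  rcases eq_or_ne w 0 with rfl | hw
  · simp
  have hu : ‖w‖⁻¹ • w ∈ Metric.sphere (0 : EuclideanSpace ℝ (Fin k)) 1 := by
    simp [norm_smul, hw]
  have h : sigmaLast M ≤ ‖toEuclideanLin Mᵀ (‖w‖⁻¹ • w)‖ :=
    ciInf_le ⟨0, Set.forall_mem_range.mpr fun _ ↦ norm_nonneg _⟩ (⟨_, hu⟩ : Metric.sphere _ _)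
  rw [map_smul, norm_smul, norm_inv, norm_norm, le_inv_mul_iff₀ (norm_pos_iff.mpr hw)] at h
  rwa [mul_comm]

lemma injective_toEuclideanLin_transpose {M : Matrix (Fin k) (Fin n) ℝ} (hM : IsUnit (M * Mᵀ)) :
    Function.Injective (toEuclideanLin Mᵀ) := by
  have hleft : (M * Mᵀ)⁻¹ * M * Mᵀ = 1 := by
    rw [Matrix.mul_assoc, nonsing_inv_mul _ ((isUnit_iff_isUnit_det _).mp hM)]
  intro x y hxy
  simpa [← LinearMap.comp_apply, ← toLpLin_mul_same, hleft] using
    congrArg (toEuclideanLin ((M * Mᵀ)⁻¹ * M)) hxy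

lemma sigmaLast_pos (hk : 0 < k) {M : Matrix (Fin k) (Fin n) ℝ} (hM : IsUnit (M * Mᵀ)) :
    0 < sigmaLast M := by
  obtain ⟨K, hK0, hK⟩ := (toEuclideanLin Mᵀ).exists_antilipschitzWith
    (LinearMap.ker_eq_bot.mpr (injective_toEuclideanLin_transpose hM))
  have : Nonempty (Fin k) := ⟨⟨0, hk⟩⟩
  have : Nonempty (Metric.sphere (0 : EuclideanSpace ℝ (Fin k)) 1) :=
    (NormedSpace.sphere_nonempty.mpr zero_le_one).to_subtype
  refine (inv_pos.mpr (NNReal.coe_pos.mpr hK0)).trans_le (le_ciInf fun u ↦ ?_)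
  have hu := ZeroHomClass.bound_of_antilipschitz _ hK u
  rw [mem_sphere_zero_iff_norm.mp u.2] at hu
  exact (inv_le_iff_one_le_mul₀' (NNReal.coe_pos.mpr hK0)).mpr hu

lemma l2_opNorm_transpose_mul_inv_le {M : Matrix (Fin k) (Fin n) ℝ}
    (hM : IsUnit (M * Mᵀ)) (hσ : 0 < sigmaLast M) :
    ‖Mᵀ * (M * Mᵀ)⁻¹‖ ≤ (sigmaLast M)⁻¹ := by
  rw [l2_opNorm_def]
  refine ContinuousLinearMap.opNorm_le_bound _ (inv_nonneg.mpr hσ.le) fun u ↦ ?_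
  set w := toEuclideanLin (M * Mᵀ)⁻¹ u
  set v := toEuclideanLin Mᵀ w
  have hv : (toEuclideanLin.trans LinearMap.toContinuousLinearMap (Mᵀ * (M * Mᵀ)⁻¹)) u = v := by
    simp [v, w]
  have hMv : toEuclideanLin M v = u := by
    have hright : M * (Mᵀ * (M * Mᵀ)⁻¹) = 1 := by
      rw [← Matrix.mul_assoc, mul_nonsing_inv _ ((isUnit_iff_isUnit_det _).mp hM)]
    simp [v, w, ← LinearMap.comp_apply, ← toLpLin_mul_same, hright]
  have hvv : ‖v‖ * ‖v‖ ≤ ‖w‖ * ‖u‖ :=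
    calc ‖v‖ * ‖v‖ = inner ℝ (toEuclideanLin Mᵀ w) v := (real_inner_self_eq_norm_mul_norm v).symm
      _ = inner ℝ w u := by rw [inner_toEuclideanLin_transpose, hMv]
      _ ≤ ‖w‖ * ‖u‖ := real_inner_le_norm w u
  have hσw : sigmaLast M * ‖w‖ ≤ ‖v‖ := sigmaLast_mul_norm_le M w
  rw [hv, inv_mul_eq_div, le_div_iff₀ hσ]
  rcases (norm_nonneg v).eq_or_lt with hv0 | hv0
  · rw [← hv0, zero_mul]
    exact norm_nonneg u
  · nlinarith [mul_le_mul_of_nonneg_left hvv hσ.le,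
      mul_le_mul_of_nonneg_right hσw (norm_nonneg u)]

end SigmaLast

/-- Let `A` be an `n×n` real symmetric positive semidefinite matrix with eigenvalues
`λ_1 ≥ … ≥ λ_n` (eigendecomposition `A = W diag(λ) Wᵀ` with `W` orthogonal), and let
`X ∈ ℝ^{n×k}` (`1 ≤ k ≤ n`) be such that `XᵀAX` is invertible. Then `λ_k > 0`,
`σ_k(XᵀA^{1/2}) > 0`, and
`‖A X (XᵀAX)⁻¹‖₂ ≤ κ(A_k)^{1/2} · η_k = (λ_1/λ_k)^{1/2} · λ_k^{1/2}/σ_k(XᵀA^{1/2})`. -/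
theorem stmt0 {n k : ℕ} (hk : 1 ≤ k) (hkn : k ≤ n)
    (A : Matrix (Fin n) (Fin n) ℝ) (hA : A.PosSemidef)
    (lam : Fin n → ℝ) (hlam : Antitone lam)
    (W : Matrix (Fin n) (Fin n) ℝ) (hW : Wᵀ * W = 1)
    (hAeig : A = W * Matrix.diagonal lam * Wᵀ)
    (X : Matrix (Fin n) (Fin k) ℝ)
    (hXAX : IsUnit (Xᵀ * A * X)) :
    0 < lam ⟨k - 1, by omega⟩ ∧
    0 < sigmaLast (Xᵀ * hA.sqrt) ∧
    spectralNorm' (A * X * (Xᵀ * A * X)⁻¹) ≤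
      Real.sqrt (lam ⟨0, by omega⟩ / lam ⟨k - 1, by omega⟩) *
        (Real.sqrt (lam ⟨k - 1, by omega⟩) / sigmaLast (Xᵀ * hA.sqrt)) := by
  set S := hA.sqrt
  set B := Xᵀ * S
  have hG : B * Bᵀ = Xᵀ * A * X := hA.mul_sqrt_mul_transpose X
  have hlam0 := hA.nonneg_of_eq_mul_diagonal_mul_transpose hW hAeig
  have hσ : 0 < sigmaLast B := sigmaLast_pos hk (hG ▸ hXAX)
  have hrank : k ≤ (diagonal lam).rank := by
    calc k = Fintype.card (Fin k) := (Fintype.card_fin k).symm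
      _ ≤ A.rank := card_le_rank_of_isUnit_mul_mul hXAX
      _ ≤ (diagonal lam).rank := hAeig ▸ (rank_mul_le_left _ _).trans (rank_mul_le_right _ _)
  have hlamk : 0 < lam ⟨k - 1, by omega⟩ :=
    pos_of_lt_rank_diagonal hlam hlam0 (show k - 1 < _ by omega)
  refine ⟨hlamk, hσ, ?_⟩
  have hfac : A * X * (Xᵀ * A * X)⁻¹ = S * (Bᵀ * (B * Bᵀ)⁻¹) := by
    rw [hG, transpose_mul, hA.transpose_sqrt, transpose_transpose]
    simp only [← Matrix.mul_assoc, S, hA.sqrt_mul_self]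
  calc spectralNorm' (A * X * (Xᵀ * A * X)⁻¹) = ‖S * (Bᵀ * (B * Bᵀ)⁻¹)‖ := by rw [hfac]; rfl
    _ ≤ ‖S‖ * ‖Bᵀ * (B * Bᵀ)⁻¹‖ := l2_opNorm_mul _ _
    _ ≤ √(lam ⟨0, by omega⟩) * (sigmaLast B)⁻¹ := by
        gcongr
        · exact hA.l2_opNorm_sqrt_le hW hAeig (hlam0 _) fun i ↦
            hlam (Fin.le_def.mpr (Nat.zero_le _))
        · exact l2_opNorm_transpose_mul_inv_le (hG ▸ hXAX) hσ
    _ = _ := by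
        have : √(lam ⟨k - 1, by omega⟩) ≠ 0 := (Real.sqrt_pos.mpr hlamk).ne'
        rw [Real.sqrt_div (hlam0 _)]
        field_simp
end

section
/- Let A be an n×n real symmetric matrix with an orthonormal eigenbasis u_1, …, u_n of ℝⁿ and corresponding eigenvalues θ_1, …, θ_n. Let 1 ≤ k < n, let μ and α be real numbers with θ_i + μ ≠ 0 for 1 ≤ i ≤ k, set U = (u_1 … u_k) ∈ ℝ^{n×k}, Θ = diag(θ_1, …, θ_k), and define P^{-1} = I − U Uᵀ + (α + μ) U (Θ + μI)^{-1} Uᵀ. Then P^{-1}(A + μI) u_i = (α + μ) u_i for 1 ≤ i ≤ k, and P^{-1}(A + μI) u_j = (θ_j + μ) u_j for k < j ≤ n; that is, the eigenvalues used to construct the preconditioner are mapped to α + μ and the remaining eigenvalues of A + μI are unchanged. -/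
open Matrix

/-- Let `A` be an `n×n` real symmetric matrix with an orthonormal eigenbasis
`u_1, …, u_n` of `ℝⁿ` and corresponding eigenvalues `θ_1, …, θ_n`. Let `1 ≤ k < n`,
let `μ, α` be real with `θ_i + μ ≠ 0` for `1 ≤ i ≤ k`, set `U = (u_1 … u_k)`,
`Θ = diag(θ_1, …, θ_k)`, and `P⁻¹ = I − UUᵀ + (α + μ) U (Θ + μI)⁻¹ Uᵀ`.
Then `P⁻¹(A + μI) u_i = (α + μ) u_i` for `1 ≤ i ≤ k`, and
`P⁻¹(A + μI) u_j = (θ_j + μ) u_j` for `k < j ≤ n`. -/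
theorem stmt8 {n k : ℕ} (hk : 1 ≤ k) (hkn : k < n)
    (A : Matrix (Fin n) (Fin n) ℝ) (hA : A.IsHermitian)
    (u : Fin n → Fin n → ℝ) (theta : Fin n → ℝ)
    (horth : ∀ i j, u i ⬝ᵥ u j = if i = j then 1 else 0)
    (heig : ∀ i, A *ᵥ u i = theta i • u i)
    (μ α : ℝ) (hμ : ∀ i : Fin k, theta (Fin.castLE hkn.le i) + μ ≠ 0)
    (U : Matrix (Fin n) (Fin k) ℝ) (hU : ∀ t i, U t i = u (Fin.castLE hkn.le i) t) :
    let Pinv : Matrix (Fin n) (Fin n) ℝ :=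
      1 - U * Uᵀ + (α + μ) •
        (U * (Matrix.diagonal (fun i : Fin k => theta (Fin.castLE hkn.le i)) + μ • 1)⁻¹ * Uᵀ)
    (∀ i : Fin k,
      (Pinv * (A + μ • 1)) *ᵥ u (Fin.castLE hkn.le i) = (α + μ) • u (Fin.castLE hkn.le i)) ∧
    (∀ j : Fin n, k ≤ j.val → (Pinv * (A + μ • 1)) *ᵥ u j = (theta j + μ) • u j) := by
  intro Pinv
  set c : Fin k → Fin n := Fin.castLE hkn.le with hc
  -- the diagonal matrix and its inverse
  have h1 : Matrix.diagonal (fun i : Fin k => theta (c i)) + μ • (1 : Matrix (Fin k) (Fin k) ℝ)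
      = Matrix.diagonal (fun i => theta (c i) + μ) := by
    ext i j
    by_cases h : i = j <;> simp [Matrix.one_apply, Matrix.diagonal_apply, h]
  have hD : (Matrix.diagonal (fun i : Fin k => theta (c i)) + μ • 1)⁻¹
      = Matrix.diagonal (fun i => (theta (c i) + μ)⁻¹) := by
    rw [h1]
    apply Matrix.inv_eq_right_inv
    rw [Matrix.diagonal_mul_diagonal]
    have : (fun i => (theta (c i) + μ) * (theta (c i) + μ)⁻¹) = fun _ : Fin k => (1 : ℝ) := by
      funext i; exact mul_inv_cancel₀ (hμ i)
    rw [this, Matrix.diagonal_one]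
  -- action of Uᵀ on the eigenvectors
  have hUt : ∀ j, Uᵀ *ᵥ u j = fun i => if c i = j then (1 : ℝ) else 0 := by
    intro j; funext i
    have h := horth (c i) j
    simp only [Matrix.mulVec, dotProduct, Matrix.transpose_apply, hU] at h ⊢
    exact h
  have hB : ∀ j, (A + μ • 1) *ᵥ u j = (theta j + μ) • u j := by
    intro j
    rw [Matrix.add_mulVec, heig, Matrix.smul_mulVec, Matrix.one_mulVec, add_smul]
  have hUsingle : ∀ i : Fin k, U *ᵥ (fun i' => if i' = i then (1 : ℝ) else 0) = u (c i) := by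
    intro i; funext t
    simp [Matrix.mulVec, dotProduct, mul_ite, hU]
  have hUU : ∀ i : Fin k, (U * Uᵀ) *ᵥ u (c i) = u (c i) := by
    intro i
    rw [← Matrix.mulVec_mulVec, hUt]
    have : (fun i' => if c i' = c i then (1 : ℝ) else 0)
        = fun i' => if i' = i then (1 : ℝ) else 0 := by
      funext i'; simp [hc, Fin.castLE_inj]
    rw [this, hUsingle]
  have hUDU : ∀ i : Fin k,
      (U * (Matrix.diagonal (fun i : Fin k => theta (c i)) + μ • 1)⁻¹ * Uᵀ) *ᵥ u (c i)
        = (theta (c i) + μ)⁻¹ • u (c i) := by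
    intro i
    rw [Matrix.mul_assoc, ← Matrix.mulVec_mulVec, ← Matrix.mulVec_mulVec, hUt, hD]
    have : (Matrix.diagonal fun i => (theta (c i) + μ)⁻¹) *ᵥ
        (fun i' => if c i' = c i then (1 : ℝ) else 0)
        = (theta (c i) + μ)⁻¹ • fun i' => if i' = i then (1 : ℝ) else 0 := by
      funext i'
      by_cases h : i' = i <;>
        simp [Matrix.mulVec_diagonal, hc, Fin.castLE_inj, Pi.smul_apply, smul_eq_mul, h]
    rw [this, Matrix.mulVec_smul, hUsingle]
  have hzero : ∀ j : Fin n, k ≤ j.val → Uᵀ *ᵥ u j = 0 := by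
    intro j hj
    rw [hUt]
    funext i
    have : c i ≠ j := by
      intro h
      have : (c i).val = j.val := by rw [h]
      simp [hc] at this
      omega
    simp [this]
  constructor
  · intro i
    rw [← Matrix.mulVec_mulVec, hB, Matrix.mulVec_smul]
    show (theta (c i) + μ) • (Pinv *ᵥ u (c i)) = (α + μ) • u (c i)
    have : Pinv *ᵥ u (c i) = ((α + μ) * (theta (c i) + μ)⁻¹) • u (c i) := by
      show ((1 : Matrix (Fin n) (Fin n) ℝ) - U * Uᵀ + (α + μ) •
        (U * (Matrix.diagonal (fun i : Fin k => theta (c i)) + μ • 1)⁻¹ * Uᵀ)) *ᵥ u (c i) = _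
      rw [Matrix.add_mulVec, Matrix.sub_mulVec, Matrix.one_mulVec,
        Matrix.smul_mulVec, hUU i, hUDU i, sub_self, zero_add, smul_smul]
    rw [this, smul_smul]
    congr 1
    rw [mul_comm (α + μ), ← mul_assoc, mul_inv_cancel₀ (hμ i), one_mul]
  · intro j hj
    rw [← Matrix.mulVec_mulVec, hB, Matrix.mulVec_smul]
    congr 1
    show ((1 : Matrix (Fin n) (Fin n) ℝ) - U * Uᵀ + (α + μ) •
      (U * (Matrix.diagonal (fun i : Fin k => theta (c i)) + μ • 1)⁻¹ * Uᵀ)) *ᵥ u j = u j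
    rw [Matrix.add_mulVec, Matrix.sub_mulVec, Matrix.one_mulVec, Matrix.smul_mulVec,
      Matrix.mul_assoc, ← Matrix.mulVec_mulVec, ← Matrix.mulVec_mulVec,
      ← Matrix.mulVec_mulVec, hzero j hj]
    simp
end
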